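/- arXiv:1507.01142 — 3 statements merged into one kernel-verified Lean document; each statement's English description precedes it below -/
import Mathlib

section
/- In a real inner product space, if d + Au + B = g, d ⊥ g, d ⊥ Au, (B, d) = -|d|², and (Au, g) = |Au|² (i.e. P = (Au,g)), then |B - g/2|² = |d + g/2|² and |B - g/2|² = |d - g/2|². -/
/-!
Writing `‖x ∓ g/2‖² = ⟪x, x ∓ g⟫ + ‖g‖²/4`, both identities reduce to `⟪B, B - g⟫ = ‖d‖²`
and `⟪d, d ± g⟫ = ‖d‖²`. The second is `d ⊥ g`. For the first, `B - g = -(d + Au)` and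
`⟪B, d⟫ = -‖d‖²`, so it remains to see `B ⊥ Au`: pairing `d + Au + B = g` with `Au` and using
`d ⊥ Au` and `⟪Au, g⟫ = ‖Au‖²` leaves exactly `⟪Au, B⟫ = 0`.
-/

open scoped InnerProductSpace

section

variable {E : Type*} [NormedAddCommGroup E] [InnerProductSpace ℝ E]

theorem norm_sub_half_smul_sq (x g : E) :
    ‖x - (1 / 2 : ℝ) • g‖ ^ 2 = ⟪x, x - g⟫_ℝ + ‖g‖ ^ 2 / 4 := by
  rw [norm_sub_sq_real, inner_sub_right, real_inner_smul_right, norm_smul,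
    real_inner_self_eq_norm_sq]
  norm_num
  ring

theorem norm_add_half_smul_sq (x g : E) :
    ‖x + (1 / 2 : ℝ) • g‖ ^ 2 = ⟪x, x + g⟫_ℝ + ‖g‖ ^ 2 / 4 := by
  simpa [sub_neg_eq_add] using norm_sub_half_smul_sq x (-g)

theorem inner_eq_zero_of_add_add_eq {x y z g : E} (h : x + y + z = g)
    (hxy : ⟪x, y⟫_ℝ = 0) (hyg : ⟪y, g⟫_ℝ = ‖y‖ ^ 2) : ⟪z, y⟫_ℝ = 0 := by
  rw [← h, inner_add_right, inner_add_right, real_inner_comm x, hxy,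
    real_inner_self_eq_norm_sq] at hyg
  rw [real_inner_comm]
  linarith

end

theorem stmt_2 {H : Type*} [NormedAddCommGroup H] [InnerProductSpace ℝ H]
    (d Au B g : H)
    (heq : d + Au + B = g)
    (h1 : ⟪d, g⟫_ℝ = 0) (h2 : ⟪d, Au⟫_ℝ = 0)
    (h3 : ⟪B, d⟫_ℝ = -‖d‖ ^ 2)
    (h4 : ⟪Au, g⟫_ℝ = ‖Au‖ ^ 2) :
    ‖B - (1 / 2 : ℝ) • g‖ ^ 2 = ‖d + (1 / 2 : ℝ) • g‖ ^ 2 ∧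
    ‖B - (1 / 2 : ℝ) • g‖ ^ 2 = ‖d - (1 / 2 : ℝ) • g‖ ^ 2 := by
  have hBAu : ⟪B, Au⟫_ℝ = 0 := inner_eq_zero_of_add_add_eq heq h2 h4
  have hB : ⟪B, B - g⟫_ℝ = ‖d‖ ^ 2 := by
    rw [← heq, show B - (d + Au + B) = -(d + Au) by abel, inner_neg_right, inner_add_right,
      h3, hBAu]
    ring
  have hd_add : ⟪d, d + g⟫_ℝ = ‖d‖ ^ 2 := by
    rw [inner_add_right, h1, real_inner_self_eq_norm_sq, add_zero]
  have hd_sub : ⟪d, d - g⟫_ℝ = ‖d‖ ^ 2 := by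
    rw [inner_sub_right, h1, real_inner_self_eq_norm_sq, sub_zero]
  rw [norm_sub_half_smul_sq, norm_add_half_smul_sq, norm_sub_half_smul_sq, hB, hd_add, hd_sub]
  exact ⟨rfl, rfl⟩
end

section
/- With ρ := λP - s < 0 and positive reals e, E, P, G² satisfying G² > P and 2e > E (taking λ = 2 in context, but stated for general arrangement), define α = λ - γ - (e/E)β and β as above; then α² + 4β = (1/(G²-P) + (e/E)/(2e-E))² ρ² + 4ρ((1 - e/E)/(2e-E) - 1/(G²-P)) + 4, and this quantity is strictly positive for all ρ (the discriminant of the quadratic in ρ is negative). -/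
/-! The identity is a ring identity in `ρ`. Writing the quadratic as `a²ρ² + 4ρb + 4`, one has
`a + b = 1/(2e - E)` and `a - b = 2/(G² - P) + 1/E`, both positive, so `b² < a²`: the
discriminant `16(b² - a²)` is negative. -/

theorem quadratic_pos_of_sq_lt {K : Type*} [Field K] [LinearOrder K] [IsStrictOrderedRing K]
    {a b : K} (h : b ^ 2 < a ^ 2) (x : K) : 0 < a ^ 2 * x ^ 2 + 4 * x * b + 4 := by
  have ha : 0 < a ^ 2 := (sq_nonneg b).trans_lt h
  have hsq : a ^ 2 * (a ^ 2 * x ^ 2 + 4 * x * b + 4)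
      = (a ^ 2 * x + 2 * b) ^ 2 + 4 * (a ^ 2 - b ^ 2) := by
    ring
  refine pos_of_mul_pos_right (a := a ^ 2) ?_ ha.le
  rw [hsq]
  exact add_pos_of_nonneg_of_pos (sq_nonneg _) (by linarith)

theorem sq_sub_one_div_lt_sq_one_div_add {K : Type*} [Field K] [LinearOrder K]
    [IsStrictOrderedRing K] {p q k : K} (hp : 0 < p) (hq : 0 < q) (hk : 1 ≤ 2 * k) :
    ((1 - k) / q - 1 / p) ^ 2 < (1 / p + k / q) ^ 2 := by
  have hp' : 0 < 1 / p := one_div_pos.2 hp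
  have hq' : 0 < 1 / q := one_div_pos.2 hq
  have hkq : 0 ≤ (2 * k - 1) / q := div_nonneg (by linarith) hq.le
  apply sq_lt_sq'
  · linarith [show (1 - k) / q - 1 / p + (1 / p + k / q) = 1 / q by ring]
  · linarith [show 1 / p + k / q - ((1 - k) / q - 1 / p) = 2 * (1 / p) + (2 * k - 1) / q by
      ring]

theorem stmt_9_general (e E P G2 ρ γ β α : ℝ)
    (hE : 0 < E) (hG : P < G2) (h2e : E < 2 * e)
    (hγ : γ = ρ / (G2 - P)) (hβ : β = ρ / (2 * e - E))
    (hα : α = 2 - γ - (e / E) * β) :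
    α ^ 2 + 4 * β
      = (1 / (G2 - P) + (e / E) / (2 * e - E)) ^ 2 * ρ ^ 2
        + 4 * ρ * ((1 - e / E) / (2 * e - E) - 1 / (G2 - P)) + 4 ∧
    0 < α ^ 2 + 4 * β := by
  have hid : α ^ 2 + 4 * β
      = (1 / (G2 - P) + (e / E) / (2 * e - E)) ^ 2 * ρ ^ 2
        + 4 * ρ * ((1 - e / E) / (2 * e - E) - 1 / (G2 - P)) + 4 := by
    subst hα hγ hβ
    ring
  have hk : 1 ≤ 2 * (e / E) := by
    rw [mul_div_assoc', le_div_iff₀ hE]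
    linarith
  refine ⟨hid, hid ▸ quadratic_pos_of_sq_lt ?_ ρ⟩
  exact sq_sub_one_div_lt_sq_one_div_add (sub_pos.2 hG) (by linarith) hk

/-- With `ρ = λP − s < 0`, `λ = 2`, `γ = ρ/(G²−P)`, `β = ρ/(2e−E)`,
`α = 2 − γ − (e/E)β`, the quantity `α² + 4β` equals the displayed quadratic
in `ρ`, and is strictly positive. -/
theorem stmt_9 (e E P G2 ρ γ β α : ℝ)
    (hE : 0 < E) (heE : e ≤ E) (he : 0 < e) (hP : 0 < P)
    (hG : P < G2) (h2e : E < 2 * e)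
    (hρ : ρ < 0)
    (hγ : γ = ρ / (G2 - P)) (hβ : β = ρ / (2 * e - E))
    (hα : α = 2 - γ - (e / E) * β) :
    α ^ 2 + 4 * β
      = (1 / (G2 - P) + (e / E) / (2 * e - E)) ^ 2 * ρ ^ 2
        + 4 * ρ * ((1 - e / E) / (2 * e - E) - 1 / (G2 - P)) + 4 ∧
    0 < α ^ 2 + 4 * β :=
  stmt_9_general e E P G2 ρ γ β α hE hG h2e hγ hβ hα
end

section
/- Let α : ℤ² → ℂ be a function supported on S₁ ∪ S₂ ∪ S₃ where S₁ = {±(1,0),±(0,1)}, S₂ = {±(1,1),±(1,-1)}, S₃ = {±(1,2),±(1,-2),±(2,1),±(2,-1)}, satisfying the reality condition α(-k) = conj(α(k)) and the 28 bilinear vanishing conditions: α(0,-1)α(2,1) = α(0,1)α(2,-1); α(1,0)α(-1,2) = α(-1,0)α(1,2); α(0,1)α(-2,-1) = α(0,-1)α(-2,1); α(-1,0)α(1,-2) = α(1,0)α(-1,-2); α(1,0)α(1,2) = α(0,1)α(2,1); α(0,1)α(-2,1) = α(-1,0)α(-1,2); α(0,-1)α(2,-1) = α(1,0)α(1,-2);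 α(-1,0)α(-1,-2) = α(0,-1)α(-2,-1); α(2,1)α(1,-1) = α(2,-1)α(1,1); α(-1,2)α(1,1) = α(1,2)α(-1,1); α(-2,-1)α(-1,1) = α(-2,1)α(-1,-1); α(1,-2)α(-1,-1) = α(-1,-2)α(1,-1); and the products α(0,1)α(1,2), α(1,0)α(2,1), α(0,1)α(-1,2), α(-1,0)α(-2,1), α(0,-1)α(1,-2), α(0,-1)α(-1,-2), α(1,0)α(2,-1), α(-1,0)α(-2,-1), α(1,2)α(1,1), α(2,1)α(1,1), α(-1,2)α(-1,1), α(-2,1)α(-1,1), α(-1,-2)α(-1,-1), α(1,-2)α(1,-1), α(1,-1)α(2,-1), α(-2,-1)α(-1,-1) all vanish. If α(k₀) ≠ 0 for some k₀ ∈ S₃, then α(k) = 0 for all k ∈ S₁ ∪ S₂. -/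
def S1 : Set (ℤ × ℤ) := {(1, 0), (-1, 0), (0, 1), (0, -1)}

def S2 : Set (ℤ × ℤ) := {(1, 1), (-1, -1), (-1, 1), (1, -1)}

def S3 : Set (ℤ × ℤ) :=
  {(1, 2), (-1, -2), (1, -2), (-1, 2), (2, 1), (-2, -1), (2, -1), (-2, 1)}

/-! The reality condition gives `α (-k) = 0 ↔ α k = 0`, so it suffices to show that `α` vanishes
at one vector of each pair `±k` of norm² 1 and 2, and nonvanishing at a norm² 5 vector may be
assumed at one of `(1, 2)`, `(1, -2)`, `(2, 1)`, `(2, -1)`. A nonzero coefficient there kills,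
through the vanishing products, a neighbour of norm² 1 and one of norm² 2; each remaining
representative then occurs in a balance relation `a * b = c * d` whose other side has just been
shown to vanish and in which its partner factor is the nonzero coefficient itself. -/

section Reality

variable {α : ℤ × ℤ → ℂ} (hreal : ∀ k : ℤ × ℤ, α (-k) = starRingEnd ℂ (α k))
include hreal

theorem apply_neg_eq_zero_iff (k : ℤ × ℤ) : α (-k) = 0 ↔ α k = 0 := by
  rw [hreal, map_eq_zero]

theorem eq_zero_on_S1_union_S2 (h10 : α (1, 0) = 0) (h01 : α (0, 1) = 0) (h11 : α (1, 1) = 0)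
    (h1m1 : α (1, -1) = 0) : ∀ k ∈ S1 ∪ S2, α k = 0 := by
  have hneg := apply_neg_eq_zero_iff hreal
  intro k hk
  simp only [S1, S2, Set.mem_union, Set.mem_insert_iff, Set.mem_singleton_iff] at hk
  rcases hk with (rfl | rfl | rfl | rfl) | (rfl | rfl | rfl | rfl)
  exacts [h10, (hneg (1, 0)).mpr h10, h01, (hneg (0, 1)).mpr h01, h11, (hneg (1, 1)).mpr h11,
    (hneg (1, -1)).mpr h1m1, h1m1]

theorem ne_zero_at_positive_S3_of_exists (hne : ∃ k₀ ∈ S3, α k₀ ≠ 0) :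
    α (1, 2) ≠ 0 ∨ α (1, -2) ≠ 0 ∨ α (2, 1) ≠ 0 ∨ α (2, -1) ≠ 0 := by
  have hneg := apply_neg_eq_zero_iff hreal
  obtain ⟨k₀, hk₀, hα⟩ := hne
  contrapose! hα
  obtain ⟨h12, h1m2, h21, h2m1⟩ := hα
  simp only [S3, Set.mem_insert_iff, Set.mem_singleton_iff] at hk₀
  rcases hk₀ with rfl | rfl | rfl | rfl | rfl | rfl | rfl | rfl
  exacts [h12, (hneg (1, 2)).mpr h12, h1m2, (hneg (1, -2)).mpr h1m2, h21, (hneg (2, 1)).mpr h21,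
    h2m1, (hneg (2, -1)).mpr h2m1]

theorem eq_zero_on_S1_union_S2_of_one_two (e5 : α (1, 0) * α (1, 2) = α (0, 1) * α (2, 1))
    (e10 : α (-1, 2) * α (1, 1) = α (1, 2) * α (-1, 1)) (z1 : α (0, 1) * α (1, 2) = 0)
    (z9 : α (1, 2) * α (1, 1) = 0) (hA : α (1, 2) ≠ 0) : ∀ k ∈ S1 ∪ S2, α k = 0 := by
  have h01 : α (0, 1) = 0 := (mul_eq_zero.mp z1).resolve_right hA
  have h11 : α (1, 1) = 0 := (mul_eq_zero.mp z9).resolve_left hA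
  have h10 : α (1, 0) = 0 := by simpa [h01, hA] using e5
  have hm11 : α (-1, 1) = 0 := by simpa [h11, hA] using e10.symm
  exact eq_zero_on_S1_union_S2 hreal h10 h01 h11 ((apply_neg_eq_zero_iff hreal (1, -1)).mp hm11)

theorem eq_zero_on_S1_union_S2_of_one_neg_two (e7 : α (0, -1) * α (2, -1) = α (1, 0) * α (1, -2))
    (e12 : α (1, -2) * α (-1, -1) = α (-1, -2) * α (1, -1)) (z3 : α (0, 1) * α (-1, 2) = 0)
    (z5 : α (0, -1) * α (1, -2) = 0) (z14 : α (1, -2) * α (1, -1) = 0) (hB : α (1, -2) ≠ 0) :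
    ∀ k ∈ S1 ∪ S2, α k = 0 := by
  have hB' : α (-1, 2) ≠ 0 := (apply_neg_eq_zero_iff hreal (1, -2)).not.mpr hB
  have h01 : α (0, 1) = 0 := (mul_eq_zero.mp z3).resolve_right hB'
  have h1m1 : α (1, -1) = 0 := (mul_eq_zero.mp z14).resolve_left hB
  have h0m1 : α (0, -1) = 0 := (mul_eq_zero.mp z5).resolve_right hB
  have h10 : α (1, 0) = 0 := by simpa [h0m1, hB] using e7.symm
  have hm1m1 : α (-1, -1) = 0 := by simpa [h1m1, hB] using e12
  exact eq_zero_on_S1_union_S2 hreal h10 h01 ((apply_neg_eq_zero_iff hreal (1, 1)).mp hm1m1) h1m1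

theorem eq_zero_on_S1_union_S2_of_two_one (e5 : α (1, 0) * α (1, 2) = α (0, 1) * α (2, 1))
    (e9 : α (2, 1) * α (1, -1) = α (2, -1) * α (1, 1)) (z2 : α (1, 0) * α (2, 1) = 0)
    (z10 : α (2, 1) * α (1, 1) = 0) (hC : α (2, 1) ≠ 0) : ∀ k ∈ S1 ∪ S2, α k = 0 := by
  have h10 : α (1, 0) = 0 := (mul_eq_zero.mp z2).resolve_right hC
  have h11 : α (1, 1) = 0 := (mul_eq_zero.mp z10).resolve_left hC
  have h01 : α (0, 1) = 0 := by simpa [h10, hC] using e5.symm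
  have h1m1 : α (1, -1) = 0 := by simpa [h11, hC] using e9
  exact eq_zero_on_S1_union_S2 hreal h10 h01 h11 h1m1

theorem eq_zero_on_S1_union_S2_of_two_neg_one
    (e7 : α (0, -1) * α (2, -1) = α (1, 0) * α (1, -2))
    (e9 : α (2, 1) * α (1, -1) = α (2, -1) * α (1, 1)) (z7 : α (1, 0) * α (2, -1) = 0)
    (z15 : α (1, -1) * α (2, -1) = 0) (hD : α (2, -1) ≠ 0) : ∀ k ∈ S1 ∪ S2, α k = 0 := by
  have h10 : α (1, 0) = 0 := (mul_eq_zero.mp z7).resolve_right hD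
  have h1m1 : α (1, -1) = 0 := (mul_eq_zero.mp z15).resolve_right hD
  have h0m1 : α (0, -1) = 0 := by simpa [h10, hD] using e7
  have h11 : α (1, 1) = 0 := by simpa [h1m1, hD] using e9.symm
  exact eq_zero_on_S1_union_S2 hreal h10 ((apply_neg_eq_zero_iff hreal (0, 1)).mp h0m1) h11 h1m1

end Reality

theorem stmt_17_general (α : ℤ × ℤ → ℂ)
    (hreal : ∀ k : ℤ × ℤ, α (-k) = starRingEnd ℂ (α k))
    (e5 : α (1, 0) * α (1, 2) = α (0, 1) * α (2, 1))
    (e7 : α (0, -1) * α (2, -1) = α (1, 0) * α (1, -2))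
    (e9 : α (2, 1) * α (1, -1) = α (2, -1) * α (1, 1))
    (e10 : α (-1, 2) * α (1, 1) = α (1, 2) * α (-1, 1))
    (e12 : α (1, -2) * α (-1, -1) = α (-1, -2) * α (1, -1))
    (z1 : α (0, 1) * α (1, 2) = 0)
    (z2 : α (1, 0) * α (2, 1) = 0)
    (z3 : α (0, 1) * α (-1, 2) = 0)
    (z5 : α (0, -1) * α (1, -2) = 0)
    (z7 : α (1, 0) * α (2, -1) = 0)
    (z9 : α (1, 2) * α (1, 1) = 0)
    (z10 : α (2, 1) * α (1, 1) = 0)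
    (z14 : α (1, -2) * α (1, -1) = 0)
    (z15 : α (1, -1) * α (2, -1) = 0)
    (hne : ∃ k₀ ∈ S3, α k₀ ≠ 0) :
    ∀ k ∈ S1 ∪ S2, α k = 0 := by
  rcases ne_zero_at_positive_S3_of_exists hreal hne with hA | hB | hC | hD
  · exact eq_zero_on_S1_union_S2_of_one_two hreal e5 e10 z1 z9 hA
  · exact eq_zero_on_S1_union_S2_of_one_neg_two hreal e7 e12 z3 z5 z14 hB
  · exact eq_zero_on_S1_union_S2_of_two_one hreal e5 e9 z2 z10 hC
  · exact eq_zero_on_S1_union_S2_of_two_neg_one hreal e7 e9 z7 z15 hD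

/-- If the Fourier coefficients of a chained ghost solution (λ = 2, μ₋ = 1,
μ₊ = 5) do not vanish at some wave vector of squared norm 5, then they vanish
at all wave vectors of squared norm 1 and 2. -/
theorem stmt_17 (α : ℤ × ℤ → ℂ)
    (hsupp : ∀ k : ℤ × ℤ, k ∉ S1 ∪ S2 ∪ S3 → α k = 0)
    (hreal : ∀ k : ℤ × ℤ, α (-k) = starRingEnd ℂ (α k))
    (e1 : α (0, -1) * α (2, 1) = α (0, 1) * α (2, -1))
    (e2 : α (1, 0) * α (-1, 2) = α (-1, 0) * α (1, 2))
    (e3 : α (0, 1) * α (-2, -1) = α (0, -1) * α (-2, 1))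
    (e4 : α (-1, 0) * α (1, -2) = α (1, 0) * α (-1, -2))
    (e5 : α (1, 0) * α (1, 2) = α (0, 1) * α (2, 1))
    (e6 : α (0, 1) * α (-2, 1) = α (-1, 0) * α (-1, 2))
    (e7 : α (0, -1) * α (2, -1) = α (1, 0) * α (1, -2))
    (e8 : α (-1, 0) * α (-1, -2) = α (0, -1) * α (-2, -1))
    (e9 : α (2, 1) * α (1, -1) = α (2, -1) * α (1, 1))
    (e10 : α (-1, 2) * α (1, 1) = α (1, 2) * α (-1, 1))
    (e11 : α (-2, -1) * α (-1, 1) = α (-2, 1) * α (-1, -1))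
    (e12 : α (1, -2) * α (-1, -1) = α (-1, -2) * α (1, -1))
    (z1 : α (0, 1) * α (1, 2) = 0)
    (z2 : α (1, 0) * α (2, 1) = 0)
    (z3 : α (0, 1) * α (-1, 2) = 0)
    (z4 : α (-1, 0) * α (-2, 1) = 0)
    (z5 : α (0, -1) * α (1, -2) = 0)
    (z6 : α (0, -1) * α (-1, -2) = 0)
    (z7 : α (1, 0) * α (2, -1) = 0)
    (z8 : α (-1, 0) * α (-2, -1) = 0)
    (z9 : α (1, 2) * α (1, 1) = 0)
    (z10 : α (2, 1) * α (1, 1) = 0)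
    (z11 : α (-1, 2) * α (-1, 1) = 0)
    (z12 : α (-2, 1) * α (-1, 1) = 0)
    (z13 : α (-1, -2) * α (-1, -1) = 0)
    (z14 : α (1, -2) * α (1, -1) = 0)
    (z15 : α (1, -1) * α (2, -1) = 0)
    (z16 : α (-2, -1) * α (-1, -1) = 0)
    (hne : ∃ k₀ ∈ S3, α k₀ ≠ 0) :
    ∀ k ∈ S1 ∪ S2, α k = 0 :=
  stmt_17_general α hreal e5 e7 e9 e10 e12 z1 z2 z3 z5 z7 z9 z10 z14 z15 hne
end
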